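/- arXiv:0901.2192 — 5 statements merged into one kernel-verified Lean document; each statement's English description precedes it below -/
import Mathlib

section
/- Let M be a nonempty finite type (the message space), V a finite type (the space of adversary views), ε ≥ 0 a real number, and ν : M → PMF(V) a family of probability mass functions such that Δ(ν(m₀), ν(m₁)) ≤ ε for all m₀, m₁ ∈ M. Then for every guessing function g : V → M the following holds: if m is sampled uniformly from M and then v is sampled from ν(m), the probability that g(v) = m is at most ε + 1/|M|; that is, (1/|M|)·∑_{m∈M} Pr_{v←ν(m)}[g(v)=m] ≤ ε + 1/|M|. (This is Lemma 2: no computationally unbounded adversary can guess a uniformly chosen secret message from its view of an ε-private protocol with probability exceeding ε + 1/|M|.) -/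
/-- Lemma 2 of the paper.
If all pairwise view distributions of an `ε`-private protocol are within statistical
distance `ε`, then no guessing function `g` can recover a uniformly chosen message `m`
from a view sampled from `ν m` with probability exceeding `ε + 1/|M|`. -/
theorem guessing_probability_le_eps_add_inv_card
    {M V : Type*} [Fintype M] [Nonempty M] [Fintype V] [DecidableEq M]
    (ε : ℝ) (hε : 0 ≤ ε) (ν : M → PMF V)
    (hpriv : ∀ m₀ m₁ : M,
      (1 / 2) * ∑ v, |(ν m₀ v).toReal - (ν m₁ v).toReal| ≤ ε)
    (g : V → M) :
    (1 / (Fintype.card M : ℝ)) *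
        ∑ m, ∑ v, (if g v = m then (ν m v).toReal else 0) ≤
      ε + 1 / (Fintype.card M : ℝ) := by
  set p : M → V → ℝ := fun m v => (ν m v).toReal with hp
  have hsum : ∀ m : M, ∑ v, p m v = 1 := by
    intro m
    have h1 : ∑' v, (ν m v) = 1 := (ν m).tsum_coe
    rw [tsum_fintype] at h1
    have : (∑ v, ν m v).toReal = 1 := by rw [h1]; simp
    rw [ENNReal.toReal_sum (fun v _ => (ν m).apply_ne_top v)] at this
    exact this
  obtain ⟨m₀⟩ := ‹Nonempty M›
  have key : ∀ m : M, ∑ v, (if g v = m then p m v else 0) ≤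
      (∑ v, (if g v = m then p m₀ v else 0)) + ε := by
    intro m
    have h1 : ∑ v, (if g v = m then p m v else 0)
        - ∑ v, (if g v = m then p m₀ v else 0)
        ≤ (1/2) * ∑ v, |p m v - p m₀ v| := by
      rw [← Finset.sum_sub_distrib]
      have hle : ∀ v : V, ((if g v = m then p m v else 0)
          - (if g v = m then p m₀ v else 0))
          ≤ (|p m v - p m₀ v| + (p m v - p m₀ v)) / 2 := by
        intro v
        by_cases h : g v = m
        · simp only [h, if_pos]
          have := le_abs_self (p m v - p m₀ v)
          linarith
        · simp only [h, if_neg, not_false_iff]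
          have := abs_nonneg (p m v - p m₀ v)
          have := neg_abs_le (p m v - p m₀ v)
          linarith
      calc ∑ v, ((if g v = m then p m v else 0) - (if g v = m then p m₀ v else 0))
          ≤ ∑ v, (|p m v - p m₀ v| + (p m v - p m₀ v)) / 2 :=
            Finset.sum_le_sum (fun v _ => hle v)
        _ = (1/2) * ∑ v, |p m v - p m₀ v| := by
            rw [← Finset.sum_div, Finset.sum_add_distrib, Finset.sum_sub_distrib,
              hsum m, hsum m₀]
            ring
    have h2 := hpriv m m₀
    linarith
  have htot : ∑ m, ∑ v, (if g v = m then p m v else 0)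
      ≤ 1 + (Fintype.card M : ℝ) * ε := by
    calc ∑ m, ∑ v, (if g v = m then p m v else 0)
        ≤ ∑ m, ((∑ v, (if g v = m then p m₀ v else 0)) + ε) :=
          Finset.sum_le_sum (fun m _ => key m)
      _ = (∑ m, ∑ v, (if g v = m then p m₀ v else 0)) + (Fintype.card M : ℝ) * ε := by
          rw [Finset.sum_add_distrib]
          simp [Finset.card_univ, mul_comm]
      _ = 1 + (Fintype.card M : ℝ) * ε := by
          rw [Finset.sum_comm]
          congr 1
          have : ∀ v : V, ∑ m, (if g v = m then p m₀ v else 0) = p m₀ v := by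
            intro v
            rw [Finset.sum_ite_eq Finset.univ (g v) (fun _ => p m₀ v)]
            simp
          simp_rw [this]
          exact hsum m₀
  have hcard : (0:ℝ) < (Fintype.card M : ℝ) := by
    exact_mod_cast Fintype.card_pos
  rw [div_mul_eq_mul_div, one_mul, div_le_iff₀ hcard]
  have : (ε + 1 / (Fintype.card M : ℝ)) * (Fintype.card M : ℝ)
      = 1 + (Fintype.card M : ℝ) * ε := by
    field_simp
    ring
  rw [this]
  exact htot
end

section
/- Let m, ℓ be natural numbers, I a nonempty finite index set, γ ≥ 0 a real number, and H = (h_i)_{i∈I} a γ-almost strongly universal₂ family of functions from {0,1}^m to {0,1}^ℓ. Then for any two pairs (a₁, c₁) ≠ (a₂, c₂) in {0,1}^m × {0,1}^ℓ, the number of indices i ∈ I with c₁ ⊕ h_i(a₁) = c₂ ⊕ h_i(a₂) is at most 2^ℓ·γ·|I|; equivalently, Pr_{i←I}[c₁ ⊕ h_i(a₁) = c₂ ⊕ h_i(a₂)] ≤ 2^ℓ·γ for i uniform on I. (Corollary 2.) -/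
/-- Corollary 2 of the paper.
If `H = (h_i)_{i∈I}` is a `γ`-almost strongly universal₂ family of functions
`{0,1}^m → {0,1}^ℓ`, then for any `(a₁,c₁) ≠ (a₂,c₂)` the fraction of indices `i`
with `c₁ ⊕ h_i(a₁) = c₂ ⊕ h_i(a₂)` is at most `2^ℓ · γ`. -/
theorem asu2_xor_collision_bound
    {m ℓ : ℕ} {I : Type*} [Fintype I] [Nonempty I]
    (γ : ℝ) (hγ : 0 ≤ γ)
    (H : I → (Fin m → Bool) → (Fin ℓ → Bool))
    (hH : ∀ a₁ a₂ : Fin m → Bool, a₁ ≠ a₂ → ∀ b₁ b₂ : Fin ℓ → Bool,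
      ((Finset.univ.filter (fun i => H i a₁ = b₁ ∧ H i a₂ = b₂)).card : ℝ) ≤
        γ * (Fintype.card I : ℝ))
    (a₁ a₂ : Fin m → Bool) (c₁ c₂ : Fin ℓ → Bool)
    (hne : (a₁, c₁) ≠ (a₂, c₂)) :
    ((Finset.univ.filter (fun i =>
        (fun k => xor (c₁ k) (H i a₁ k)) = (fun k => xor (c₂ k) (H i a₂ k)))).card : ℝ) ≤
      (2 : ℝ) ^ ℓ * γ * (Fintype.card I : ℝ) := by
  classical
  by_cases ha : a₁ = a₂
  · have hc : c₁ ≠ c₂ := fun h => hne (by rw [ha, h])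
    have hempty : (Finset.univ.filter (fun i : I =>
        (fun k => xor (c₁ k) (H i a₁ k)) = (fun k => xor (c₂ k) (H i a₂ k)))) = ∅ := by
      rw [Finset.filter_eq_empty_iff]
      intro i _ h
      apply hc
      funext k
      have hk := congrFun h k
      subst ha
      revert hk
      cases c₁ k <;> cases c₂ k <;> cases H i a₁ k <;> simp
    rw [hempty]
    simp only [Finset.card_empty, Nat.cast_zero]
    positivity
  · have hsub : (Finset.univ.filter (fun i : I =>
        (fun k => xor (c₁ k) (H i a₁ k)) = (fun k => xor (c₂ k) (H i a₂ k)))) ⊆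
        (Finset.univ : Finset (Fin ℓ → Bool)).biUnion (fun b =>
          Finset.univ.filter (fun i : I =>
            H i a₁ = b ∧ H i a₂ = fun k => xor (c₂ k) (xor (c₁ k) (b k)))) := by
      intro i hi
      simp only [Finset.mem_filter, Finset.mem_univ, true_and] at hi
      simp only [Finset.mem_biUnion, Finset.mem_filter, Finset.mem_univ, true_and]
      refine ⟨H i a₁, rfl, ?_⟩
      funext k
      have hk := congrFun hi k
      revert hk
      cases c₁ k <;> cases c₂ k <;> cases H i a₁ k <;> cases H i a₂ k <;> simp
    have h1 : ((Finset.univ.filter (fun i : I =>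
        (fun k => xor (c₁ k) (H i a₁ k)) = (fun k => xor (c₂ k) (H i a₂ k)))).card : ℝ) ≤
        ∑ b : Fin ℓ → Bool, ((Finset.univ.filter (fun i : I =>
            H i a₁ = b ∧ H i a₂ = fun k => xor (c₂ k) (xor (c₁ k) (b k)))).card : ℝ) := by
      have := (Finset.card_le_card hsub).trans (Finset.card_biUnion_le)
      exact_mod_cast this
    refine h1.trans ?_
    have h2 : ∑ b : Fin ℓ → Bool, ((Finset.univ.filter (fun i : I =>
            H i a₁ = b ∧ H i a₂ = fun k => xor (c₂ k) (xor (c₁ k) (b k)))).card : ℝ) ≤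
        ∑ _b : Fin ℓ → Bool, γ * (Fintype.card I : ℝ) :=
      Finset.sum_le_sum (fun b _ => hH a₁ a₂ ha b _)
    refine h2.trans ?_
    rw [Finset.sum_const, Finset.card_univ]
    simp [Fintype.card_fun, mul_assoc]
end

section
/- Let n ≥ 1, m, ℓ be natural numbers, I a nonempty finite index set, and H = (h_i)_{i∈I} a 2^(1−2ℓ)-almost strongly universal₂ family of functions from {0,1}^m to {0,1}^ℓ. Fix, for each wire j ∈ {1,…,n}, original values (r_j, R_j) ∈ {0,1}^ℓ × {0,1}^m and (possibly tampered) values (r_j', R_j') ∈ {0,1}^ℓ × {0,1}^m, and let S = {j : (r_j, R_j) ≠ (r_j', R_j')} with |S| ≤ n − 1. If a function f : {1,…,n} → I is chosen uniformly at random (independent uniform hash keys per wire), then the probability that there exists some j ∈ S with r_j ⊕ h_{f(j)}(R_j) = r_j' ⊕ h_{f(j)}(R_j') is at most (n−1)·2^(1−ℓ); that is, |{f : ∃ j ∈ S, r_j ⊕ h_{f(j)}(R_j) = r_j' ⊕ h_{f(j)}(R_j')}| ≤ (n−1)·2^(1−ℓ)·|I|^n. (This is the reliability bound of protocol Π₁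 in Theorem 4: the probability that at least one tampered wire passes the hash-tag consistency check is at most (n−1)·2^(1−ℓ).) -/
open Finset

private lemma bool_xor_aux : ∀ a b x y : Bool, xor a x = xor b y → y = xor b (xor a x) := by
  decide

private lemma bool_xor_cancel : ∀ a b x : Bool, xor a x = xor b x → a = b := by
  decide

private lemma count_coord {n : ℕ} {I : Type*} [Fintype I] [DecidableEq I]
    (j : Fin n) (B : Finset I) :
    (Finset.univ.filter (fun f : Fin n → I => f j ∈ B)).card
      = B.card * (Fintype.card I) ^ (n - 1) := by
  classical
  have key : Finset.univ.filter (fun f : Fin n → I => f j ∈ B)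
      = Fintype.piFinset (fun i => if i = j then B else Finset.univ) := by
    ext f
    simp only [mem_filter, mem_univ, true_and, Fintype.mem_piFinset]
    constructor
    · intro h i
      by_cases hij : i = j
      · subst hij; simpa using h
      · simp [hij]
    · intro h
      have := h j
      simpa using this
  rw [key, Fintype.card_piFinset]
  rw [← Finset.mul_prod_erase Finset.univ _ (mem_univ j)]
  simp only [if_pos rfl]
  congr 1
  rw [Finset.prod_congr rfl (fun i hi => by rw [if_neg (Finset.ne_of_mem_erase hi)])]
  rw [Finset.prod_const, Finset.card_univ, Finset.card_erase_of_mem (mem_univ j),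
    Finset.card_univ, Fintype.card_fin]

/-- reliability bound of protocol Π₁, Theorem 4.
With a `2^(1−2ℓ)`-almost strongly universal₂ family and independently uniform hash
keys on the `n` wires, the probability that some tampered wire passes the hash-tag
consistency check is at most `(n−1)·2^(1−ℓ)`. -/
theorem reliability_bound_bad_wire
    {n m ℓ : ℕ} (hn : 1 ≤ n) {I : Type*} [Fintype I] [Nonempty I]
    (H : I → (Fin m → Bool) → (Fin ℓ → Bool))
    (hH : ∀ a₁ a₂ : Fin m → Bool, a₁ ≠ a₂ → ∀ b₁ b₂ : Fin ℓ → Bool,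
      ((Finset.univ.filter (fun i => H i a₁ = b₁ ∧ H i a₂ = b₂)).card : ℝ) ≤
        (2 : ℝ) ^ ((1 : ℤ) - 2 * ℓ) * (Fintype.card I : ℝ))
    (r r' : Fin n → (Fin ℓ → Bool)) (R R' : Fin n → (Fin m → Bool))
    (hS : (Finset.univ.filter (fun j : Fin n => (r j, R j) ≠ (r' j, R' j))).card ≤ n - 1) :
    ((Finset.univ.filter (fun f : Fin n → I => ∃ j : Fin n,
        (r j, R j) ≠ (r' j, R' j) ∧
        (fun k => xor (r j k) (H (f j) (R j) k)) =
          (fun k => xor (r' j k) (H (f j) (R' j) k)))).card : ℝ) ≤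
      ((n : ℝ) - 1) * (2 : ℝ) ^ ((1 : ℤ) - ℓ) * (Fintype.card I : ℝ) ^ n := by
  classical
  set S : Finset (Fin n) :=
    Finset.univ.filter (fun j : Fin n => (r j, R j) ≠ (r' j, R' j)) with hSdef
  set Bad : Fin n → Finset I := fun j => Finset.univ.filter (fun i =>
      (fun k => xor (r j k) (H i (R j) k)) =
        (fun k => xor (r' j k) (H i (R' j) k))) with hBad
  -- Per-wire bound on bad hash keys
  have hBadcard : ∀ j ∈ S, ((Bad j).card : ℝ)
      ≤ (2 : ℝ) ^ ((1 : ℤ) - ℓ) * (Fintype.card I : ℝ) := by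
    intro j hj
    have hj' : (r j, R j) ≠ (r' j, R' j) := by
      simpa [hSdef] using hj
    by_cases hR : R j = R' j
    · have hempty : Bad j = ∅ := by
        ext i
        simp only [hBad, mem_filter, mem_univ, true_and, Finset.notMem_empty, iff_false]
        intro h
        apply hj'
        have hr : r j = r' j := by
          funext k
          have hk := congrFun h k
          rw [hR] at hk
          exact bool_xor_cancel _ _ _ hk
        rw [hr, hR]
      rw [hempty]
      simp only [Finset.card_empty, Nat.cast_zero]
      positivity
    · have hsub : Bad j ⊆ (Finset.univ : Finset (Fin ℓ → Bool)).biUnion (fun b₁ =>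
          Finset.univ.filter (fun i => H i (R j) = b₁ ∧
            H i (R' j) = fun k => xor (r' j k) (xor (r j k) (b₁ k)))) := by
        intro i hi
        simp only [hBad, mem_filter, mem_univ, true_and] at hi
        simp only [mem_biUnion, mem_filter, mem_univ, true_and]
        refine ⟨H i (R j), rfl, ?_⟩
        funext k
        exact bool_xor_aux _ _ _ _ (congrFun hi k)
      have h1 : (Bad j).card ≤ ∑ b₁ : (Fin ℓ → Bool),
          (Finset.univ.filter (fun i => H i (R j) = b₁ ∧
            H i (R' j) = fun k => xor (r' j k) (xor (r j k) (b₁ k)))).card :=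
        (Finset.card_le_card hsub).trans Finset.card_biUnion_le
      have h2 : ((Bad j).card : ℝ) ≤ ∑ b₁ : (Fin ℓ → Bool),
          ((Finset.univ.filter (fun i => H i (R j) = b₁ ∧
            H i (R' j) = fun k => xor (r' j k) (xor (r j k) (b₁ k)))).card : ℝ) := by
        exact_mod_cast h1
      have h3 : ((Bad j).card : ℝ) ≤ ∑ _b₁ : (Fin ℓ → Bool),
          (2 : ℝ) ^ ((1 : ℤ) - 2 * ℓ) * (Fintype.card I : ℝ) :=
        h2.trans (Finset.sum_le_sum (fun b₁ _ => hH _ _ hR _ _))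
      rw [Finset.sum_const, Finset.card_univ] at h3
      have hcard : (Fintype.card (Fin ℓ → Bool) : ℝ) = (2 : ℝ) ^ (ℓ : ℤ) := by
        simp [Fintype.card_fun]
      refine h3.trans (le_of_eq ?_)
      rw [nsmul_eq_mul, hcard, ← mul_assoc, ← zpow_add₀ (by norm_num : (2:ℝ) ≠ 0)]
      congr 2
      ring
  -- Union bound
  have hsubU : Finset.univ.filter (fun f : Fin n → I => ∃ j : Fin n,
        (r j, R j) ≠ (r' j, R' j) ∧
        (fun k => xor (r j k) (H (f j) (R j) k)) =
          (fun k => xor (r' j k) (H (f j) (R' j) k)))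
      ⊆ S.biUnion (fun j => Finset.univ.filter (fun f : Fin n → I => f j ∈ Bad j)) := by
    intro f hf
    simp only [mem_filter, mem_univ, true_and] at hf
    obtain ⟨j, hj1, hj2⟩ := hf
    simp only [mem_biUnion, mem_filter, mem_univ, true_and]
    exact ⟨j, Finset.mem_filter.mpr ⟨mem_univ j, hj1⟩, by simp [hBad, hj2]⟩
  have hN : (Finset.univ.filter (fun f : Fin n → I => ∃ j : Fin n,
        (r j, R j) ≠ (r' j, R' j) ∧
        (fun k => xor (r j k) (H (f j) (R j) k)) =
          (fun k => xor (r' j k) (H (f j) (R' j) k)))).card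
      ≤ ∑ j ∈ S, (Bad j).card * (Fintype.card I) ^ (n - 1) := by
    refine ((Finset.card_le_card hsubU).trans Finset.card_biUnion_le).trans
      (le_of_eq (Finset.sum_congr rfl (fun j _ => count_coord j (Bad j))))
  have hR1 : ((Finset.univ.filter (fun f : Fin n → I => ∃ j : Fin n,
        (r j, R j) ≠ (r' j, R' j) ∧
        (fun k => xor (r j k) (H (f j) (R j) k)) =
          (fun k => xor (r' j k) (H (f j) (R' j) k)))).card : ℝ)
      ≤ ∑ j ∈ S, ((Bad j).card : ℝ) * ((Fintype.card I : ℝ)) ^ (n - 1) := by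
    exact_mod_cast hN
  have hpow : (Fintype.card I : ℝ) ^ n
      = (Fintype.card I : ℝ) * (Fintype.card I : ℝ) ^ (n - 1) := by
    conv_lhs => rw [show n = (n - 1) + 1 from (Nat.succ_pred_eq_of_pos hn).symm]
    rw [pow_succ]; ring
  have hR2 : ∑ j ∈ S, ((Bad j).card : ℝ) * ((Fintype.card I : ℝ)) ^ (n - 1)
      ≤ (S.card : ℝ) * ((2 : ℝ) ^ ((1 : ℤ) - ℓ) * (Fintype.card I : ℝ) ^ n) := by
    calc ∑ j ∈ S, ((Bad j).card : ℝ) * ((Fintype.card I : ℝ)) ^ (n - 1)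
        ≤ ∑ _j ∈ S, ((2 : ℝ) ^ ((1 : ℤ) - ℓ) * (Fintype.card I : ℝ))
            * ((Fintype.card I : ℝ)) ^ (n - 1) := by
          refine Finset.sum_le_sum (fun j hj => ?_)
          exact mul_le_mul_of_nonneg_right (hBadcard j hj) (by positivity)
      _ = (S.card : ℝ) * ((2 : ℝ) ^ ((1 : ℤ) - ℓ) * (Fintype.card I : ℝ) ^ n) := by
          rw [Finset.sum_const, nsmul_eq_mul, hpow]; ring
  have hScard : (S.card : ℝ) ≤ (n : ℝ) - 1 := by
    have h' : (S.card : ℝ) ≤ ((n - 1 : ℕ) : ℝ) := by exact_mod_cast hS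
    rwa [Nat.cast_sub hn, Nat.cast_one] at h'
  have hfinal := hR1.trans hR2
  refine hfinal.trans ?_
  rw [mul_assoc]
  exact mul_le_mul_of_nonneg_right hScard (by positivity)
end

section
/- Let n, m, ℓ be natural numbers and Cor ⊆ {1,…,n} a set of (corrupted) wires whose complement is nonempty. Fix arbitrary functions h_j : {0,1}^m → {0,1}^ℓ for j = 1,…,n. For a message μ ∈ {0,1}^m, define the view map sending (r, R) ∈ ({0,1}^ℓ)^n × ({0,1}^m)^n to the tuple ( (r_j, R_j)_{j∈Cor}, (r_j ⊕ h_j(R_j))_{j∉Cor}, μ ⊕ (⊕_{j∉Cor} R_j) ). Then the pushforward under this map of the uniform distribution on ({0,1}^ℓ)^n × ({0,1}^m)^n is the same probability distribution for every message μ; in particular, for any two messages m₀, m₁ ∈ {0,1}^m the resulting view distributions are identical (statistical distance zero). (This is the perfect-privacy claim of Theorem 4 for protocol Π₁.) -/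
instance : Std.Commutative (α := Bool) xor := ⟨Bool.xor_comm⟩
instance : Std.Associative (α := Bool) xor := ⟨Bool.xor_assoc⟩

/-- Bitwise XOR of the bitstrings `R j` over `j ∈ s`. -/
def bigXor {n m : ℕ} (s : Finset (Fin n)) (R : Fin n → (Fin m → Bool)) :
    Fin m → Bool :=
  fun k => s.fold xor false (fun j => R j k)

/-- The adversary's view in protocol Π₁: the pairs on the corrupted wires,
the published tags on the uncorrupted wires, and the ciphertext. -/
def view {n m ℓ : ℕ} (Cor : Finset (Fin n))
    (h : Fin n → (Fin m → Bool) → (Fin ℓ → Bool)) (μ : Fin m → Bool)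
    (rR : (Fin n → (Fin ℓ → Bool)) × (Fin n → (Fin m → Bool))) :
    ({j : Fin n // j ∈ Cor} → (Fin ℓ → Bool) × (Fin m → Bool)) ×
      ({j : Fin n // j ∉ Cor} → (Fin ℓ → Bool)) × (Fin m → Bool) :=
  (fun j => (rR.1 j.1, rR.2 j.1),
   fun j => fun k => xor (rR.1 j.1 k) (h j.1 (rR.2 j.1) k),
   fun k => xor (μ k) (bigXor Corᶜ rR.2 k))

lemma map_invol_uniform {α : Type*} [Fintype α] [Nonempty α] {f : α → α}
    (hf : Function.Involutive f) :
    PMF.map f (PMF.uniformOfFintype α) = PMF.uniformOfFintype α := by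
  ext b
  rw [PMF.map_apply, tsum_eq_single (f b)]
  · simp [hf b]
  · intro a ha
    simp only [ite_eq_right_iff]
    intro hb
    exact absurd (by rw [hb, hf]) ha

lemma bigXor_update {n m : ℕ} (s : Finset (Fin n)) (R : Fin n → Fin m → Bool)
    (j₀ : Fin n) (hj : j₀ ∈ s) (v : Fin m → Bool) (k : Fin m) :
    bigXor s (Function.update R j₀ v) k = xor (xor (bigXor s R k) (R j₀ k)) (v k) := by
  unfold bigXor
  rw [← Finset.insert_erase hj, Finset.fold_insert (Finset.notMem_erase _ _),
      Finset.fold_insert (Finset.notMem_erase _ _)]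
  have he : (s.erase j₀).fold xor false (fun j => Function.update R j₀ v j k)
      = (s.erase j₀).fold xor false (fun j => R j k) := by
    apply Finset.fold_congr
    intro x hx
    rw [Function.update_of_ne (Finset.ne_of_mem_erase hx)]
  rw [he, Function.update_self]
  generalize (s.erase j₀).fold xor false (fun j => R j k) = T
  cases v k <;> cases R j₀ k <;> cases T <;> simp

/-- perfect privacy of protocol Π₁, Theorem 4.
The distribution of the adversary's view, when the sender's coins `(r, R)` are
uniform, is the same for every transmitted message `μ`; in particular the view
distributions of any two messages are identical. -/
theorem view_distribution_independent_of_message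
    {n m ℓ : ℕ} (Cor : Finset (Fin n)) (hCor : Corᶜ.Nonempty)
    (h : Fin n → (Fin m → Bool) → (Fin ℓ → Bool))
    (m₀ m₁ : Fin m → Bool) :
    PMF.map (view Cor h m₀)
        (PMF.uniformOfFintype ((Fin n → (Fin ℓ → Bool)) × (Fin n → (Fin m → Bool)))) =
      PMF.map (view Cor h m₁)
        (PMF.uniformOfFintype ((Fin n → (Fin ℓ → Bool)) × (Fin n → (Fin m → Bool)))) := by
  classical
  obtain ⟨j₀, hj₀⟩ := hCor
  -- the new R-value at wire j₀
  set vR : (Fin n → (Fin m → Bool)) → (Fin m → Bool) :=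
    fun R k => xor (R j₀ k) (xor (m₀ k) (m₁ k)) with hvR
  set f : ((Fin n → (Fin ℓ → Bool)) × (Fin n → (Fin m → Bool))) →
      ((Fin n → (Fin ℓ → Bool)) × (Fin n → (Fin m → Bool))) :=
    fun rR =>
      (Function.update rR.1 j₀
        (fun k => xor (rR.1 j₀ k) (xor (h j₀ (rR.2 j₀) k) (h j₀ (vR rR.2) k))),
       Function.update rR.2 j₀ (vR rR.2)) with hf
  have hinv : Function.Involutive f := by
    rintro ⟨r, R⟩
    have hR2 : vR (Function.update R j₀ (vR R)) = R j₀ := by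
      funext k
      simp only [hvR, Function.update_self]
      cases R j₀ k <;> cases m₀ k <;> cases m₁ k <;> simp
    simp only [hf, Function.update_self, hR2]
    refine Prod.ext ?_ ?_
    · funext j k
      by_cases hj : j = j₀
      · subst hj
        simp only [Function.update_self]
        cases r j k <;> cases h j (R j) k <;> cases h j ((fun rR => _) : _) k <;> simp
      · simp [Function.update_of_ne hj]
    · funext j
      by_cases hj : j = j₀
      · subst hj
        simp [Function.update_self]
      · simp [Function.update_of_ne hj]
  have key : view Cor h m₀ = view Cor h m₁ ∘ f := by
    funext rR
    obtain ⟨r, R⟩ := rR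
    simp only [Function.comp_apply, hf, view]
    refine Prod.ext ?_ (Prod.ext ?_ ?_)
    · funext j
      have hne : j.1 ≠ j₀ := fun hje => (Finset.mem_compl.mp hj₀) (hje ▸ j.2)
      simp [Function.update_of_ne hne]
    · funext j k
      dsimp only
      by_cases hj : j.1 = j₀
      · rw [hj]
        simp only [Function.update_self]
        cases r j₀ k <;> cases h j₀ (R j₀) k <;> cases h j₀ (vR R) k <;> simp
      · simp [Function.update_of_ne hj]
    · funext k
      dsimp only
      rw [bigXor_update Corᶜ R j₀ hj₀ (vR R) k]
      simp only [hvR]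
      generalize bigXor Corᶜ R k = T
      cases m₀ k <;> cases m₁ k <;> cases R j₀ k <;> cases T <;> simp
  rw [key, ← PMF.map_comp, map_invol_uniform hinv]
end

section
/- Let n, m, ℓ be natural numbers and Cor ⊆ {1,…,n} with |Cor| < n. Fix arbitrary functions h_j : {0,1}^m → {0,1}^ℓ for j = 1,…,n, fixed values a_j ∈ {0,1}^ℓ × {0,1}^m for each j ∈ Cor, fixed tags t_j ∈ {0,1}^ℓ for each j ∉ Cor, a fixed ciphertext V₃ ∈ {0,1}^m, and a message μ ∈ {0,1}^m. Then the number of pairs (r, R) ∈ ({0,1}^ℓ)^n × ({0,1}^m)^n satisfying simultaneously (i) (r_j, R_j) = a_j for all j ∈ Cor, (ii) r_j ⊕ h_j(R_j) = t_j for all j ∉ Cor, and (iii) μ ⊕ (⊕_{j∉Cor} R_j) = V₃, is exactly 2^(m·(n − |Cor| − 1)). In particular this count does not depend on μ. (This is the counting computation in the privacy proof of Theorem 4: the number of sender coin tosses consistent with a fixed adversary view is 2^(m(n−|Cor|−1)), independently of the transmitted message.) -/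
/-! A consistent coin is parametrised by the pads on the honest wires other than one fixed
honest wire `j₀`: the corrupted pairs are given, each honest tag is forced by
`r_j = t_j ⊕ h_j(R_j)`, and the pad `R_{j₀}` is forced by the ciphertext equation. The remaining
`n - |Cor| - 1` pads of `m` bits each are free. -/

open Finset

theorem card_filter_eq_of_section {γ β : Type*} [Fintype γ] [Fintype β]
    {p : γ → Prop} {q : β → Prop} [DecidablePred p] [DecidablePred q]
    (π : γ → β) (σ : β → γ) (hπσ : ∀ y, q y → π (σ y) = y)
    (hp : ∀ z, p z ↔ z = σ (π z) ∧ q (π z)) :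
    #{z | p z} = #{y | q y} := by
  refine card_nbij' π σ (fun z hz => ?_) (fun y hy => ?_) (fun z hz => ?_) (fun y hy => ?_) <;>
    simp only [coe_filter, Set.mem_ofPred_eq, mem_univ, true_and] at *
  exacts [((hp z).1 hz).2, (hp _).2 ⟨by rw [hπσ y hy], by rwa [hπσ y hy]⟩, ((hp z).1 hz).1.symm,
    hπσ y hy]

theorem card_filter_forall_mem_eq_eq_pow {ι X : Type*} [Fintype ι] [DecidableEq ι]
    [Fintype X] (A : Finset ι) (c : ι → X) [DecidablePred fun f : ι → X => ∀ i ∈ A, f i = c i] :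
    #{f : ι → X | ∀ i ∈ A, f i = c i} = Fintype.card X ^ #Aᶜ := by
  have hpi : ({f : ι → X | ∀ i ∈ A, f i = c i} : Finset (ι → X)) =
      Fintype.piFinset fun i => if i ∈ A then {c i} else univ := by
    ext f
    simp only [mem_filter, mem_univ, true_and, Fintype.mem_piFinset]
    refine forall_congr' fun i => ?_
    split_ifs <;> simp [*]
  rw [hpi, Fintype.card_piFinset]
  simp only [apply_ite card, card_singleton, card_univ]
  rw [prod_ite, prod_const_one, one_mul, prod_const, filter_not, filter_mem_eq_inter,
    univ_inter, compl_eq_univ_sdiff]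

theorem card_filter_fst_eq_and {α β : Type*} [Fintype α] [Fintype β] (f : β → α) (q : β → Prop)
    [DecidablePred q] [DecidablePred fun z : α × β => z.1 = f z.2 ∧ q z.2] :
    #{z : α × β | z.1 = f z.2 ∧ q z.2} = #{y | q y} :=
  card_filter_eq_of_section Prod.snd (fun y => (f y, y)) (fun _ _ => rfl)
    fun z => by simp [Prod.ext_iff]

theorem card_filter_forall_mem_eq_and_apply_eq {ι X : Type*} [Fintype ι] [DecidableEq ι]
    [Fintype X] {A : Finset ι} {j : ι} (hj : j ∉ A) (c : ι → X) (g : (ι → X) → X)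
    (hg : ∀ R x, g (Function.update R j x) = g R)
    [DecidablePred fun R : ι → X => (∀ i ∈ A, R i = c i) ∧ R j = g R] :
    #{R : ι → X | (∀ i ∈ A, R i = c i) ∧ R j = g R} = Fintype.card X ^ #(insert j A)ᶜ := by
  classical
  rw [← card_filter_forall_mem_eq_eq_pow]
  refine card_filter_eq_of_section (Function.update · j (c j)) (fun R => Function.update R j (g R))
    (fun R hR => ?_) (fun R => ?_)
  · rw [Function.update_idem, Function.update_eq_self_iff]
    exact (hR j (mem_insert_self _ _)).symm
  · rw [Function.update_idem, hg, forall_mem_insert, Function.update_self, eq_comm (a := R),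
      Function.update_eq_self_iff, eq_self, true_and, and_comm, eq_comm (a := R j)]
    refine and_congr_right' (forall₂_congr fun i hi => ?_)
    rw [Function.update_of_ne (ne_of_mem_of_not_mem hi hj)]

theorem xor_eq_iff_eq_xor {κ : Type*} {x y z : κ → Bool} :
    (fun k => xor (x k) (y k)) = z ↔ x = fun k => xor (z k) (y k) := by
  simp only [funext_iff]
  refine forall_congr' fun k => ?_
  cases x k <;> cases y k <;> cases z k <;> decide

section bigXor

variable {n m : ℕ} {s : Finset (Fin n)} {j : Fin n}

theorem bigXor_insert (hj : j ∉ s) (R : Fin n → Fin m → Bool) :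
    bigXor (insert j s) R = fun k => xor (R j k) (bigXor s R k) :=
  funext fun _ => fold_insert hj

theorem bigXor_update_of_notMem (hj : j ∉ s) (R : Fin n → Fin m → Bool) (x : Fin m → Bool) :
    bigXor s (Function.update R j x) = bigXor s R :=
  funext fun _ => fold_congr fun i hi => by rw [Function.update_of_ne (ne_of_mem_of_not_mem hi hj)]

theorem xor_bigXor_eq_iff (hj : j ∈ s) (R : Fin n → Fin m → Bool) (μ V : Fin m → Bool) :
    (fun k => xor (μ k) (bigXor s R k)) = V ↔
      R j = fun k => xor (xor (μ k) (V k)) (bigXor (s.erase j) R k) := by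
  rw [← insert_erase hj, bigXor_insert (notMem_erase j s), insert_erase hj]
  simp only [funext_iff]
  refine forall_congr' fun k => ?_
  cases μ k <;> cases V k <;> cases R j k <;> cases bigXor (s.erase j) R k <;> decide

end bigXor

section Protocol

variable {n m ℓ : ℕ} (Cor : Finset (Fin n)) (h : Fin n → (Fin m → Bool) → (Fin ℓ → Bool))
  (a : {j : Fin n // j ∈ Cor} → (Fin ℓ → Bool) × (Fin m → Bool))
  (t : {j : Fin n // j ∉ Cor} → (Fin ℓ → Bool))

def corruptedPads : Fin n → Fin m → Bool :=
  fun j => if hj : j ∈ Cor then (a ⟨j, hj⟩).2 else fun _ => false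

def forcedTags (R : Fin n → Fin m → Bool) : Fin n → Fin ℓ → Bool :=
  fun j => if hj : j ∈ Cor then (a ⟨j, hj⟩).1 else fun k => xor (t ⟨j, hj⟩ k) (h j (R j) k)

theorem view_consistent_iff (r : Fin n → Fin ℓ → Bool) (R : Fin n → Fin m → Bool) :
    ((∀ j (hj : j ∈ Cor), (r j, R j) = a ⟨j, hj⟩) ∧
      ∀ j (hj : j ∉ Cor), (fun k => xor (r j k) (h j (R j) k)) = t ⟨j, hj⟩) ↔
      r = forcedTags Cor h a t R ∧ ∀ j ∈ Cor, R j = corruptedPads Cor a j := by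
  constructor
  · rintro ⟨hCor, hTag⟩
    refine ⟨funext fun j => ?_, fun j hj => by simp [corruptedPads, hj, ← hCor j hj]⟩
    by_cases hj : j ∈ Cor
    · simp [forcedTags, hj, ← hCor j hj]
    · simpa [forcedTags, hj] using xor_eq_iff_eq_xor.1 (hTag j hj)
  · rintro ⟨rfl, hPad⟩
    refine ⟨fun j hj => ?_, fun j hj => ?_⟩
    · simp [forcedTags, corruptedPads, hj, hPad j hj]
    · simp [forcedTags, hj]

end Protocol

open Classical in
/-- counting computation in the privacy proof of Theorem 4.
The number of sender coin tosses `(r, R)` consistent with a fixed adversary view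
(given pairs on corrupted wires, tags on uncorrupted wires, and ciphertext `V₃`)
is exactly `2^(m·(n − |Cor| − 1))`, independently of the message `μ`. -/
theorem count_consistent_coins_eq
    {n m ℓ : ℕ} (Cor : Finset (Fin n)) (hCor : Cor.card < n)
    (h : Fin n → (Fin m → Bool) → (Fin ℓ → Bool))
    (a : {j : Fin n // j ∈ Cor} → (Fin ℓ → Bool) × (Fin m → Bool))
    (t : {j : Fin n // j ∉ Cor} → (Fin ℓ → Bool))
    (V₃ μ : Fin m → Bool) :
    (Finset.univ.filter
        (fun rR : (Fin n → (Fin ℓ → Bool)) × (Fin n → (Fin m → Bool)) =>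
          (∀ j (hj : j ∈ Cor), (rR.1 j, rR.2 j) = a ⟨j, hj⟩) ∧
          (∀ j (hj : j ∉ Cor),
            (fun k => xor (rR.1 j k) (h j (rR.2 j) k)) = t ⟨j, hj⟩) ∧
          (fun k => xor (μ k) (bigXor Corᶜ rR.2 k)) = V₃)).card =
      2 ^ (m * (n - Cor.card - 1)) := by
  obtain ⟨j₀, hj₀⟩ : Corᶜ.Nonempty := by
    rw [← card_pos, card_compl, Fintype.card_fin]
    omega
  set forcedPad : (Fin n → Fin m → Bool) → Fin m → Bool :=
    fun R k => xor (xor (μ k) (V₃ k)) (bigXor (Corᶜ.erase j₀) R k)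
  have hview : ∀ rR : (Fin n → Fin ℓ → Bool) × (Fin n → Fin m → Bool),
      ((∀ j (hj : j ∈ Cor), (rR.1 j, rR.2 j) = a ⟨j, hj⟩) ∧
        (∀ j (hj : j ∉ Cor), (fun k => xor (rR.1 j k) (h j (rR.2 j) k)) = t ⟨j, hj⟩) ∧
        (fun k => xor (μ k) (bigXor Corᶜ rR.2 k)) = V₃) ↔
      rR.1 = forcedTags Cor h a t rR.2 ∧
        (∀ j ∈ Cor, rR.2 j = corruptedPads Cor a j) ∧ rR.2 j₀ = forcedPad rR.2 := by
    rintro ⟨r, R⟩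
    rw [← and_assoc, view_consistent_iff, xor_bigXor_eq_iff hj₀, and_assoc]
  simp_rw [hview]
  rw [card_filter_fst_eq_and (forcedTags Cor h a t)
      fun R => (∀ j ∈ Cor, R j = corruptedPads Cor a j) ∧ R j₀ = forcedPad R,
    card_filter_forall_mem_eq_and_apply_eq (mem_compl.1 hj₀)
      _ forcedPad fun R x => by simp only [forcedPad, bigXor_update_of_notMem (notMem_erase j₀ _)],
    card_compl, card_insert_of_notMem (mem_compl.1 hj₀), Fintype.card_fun, Fintype.card_bool,
    Fintype.card_fin, Fintype.card_fin, ← pow_mul, Nat.sub_add_eq]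
end
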